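/- Let X be a nonnegative random variable with E[ X² / log log X ] < ∞. Then for any δ > 0 and any p > 2, Σ_{n≥1} E[ ( min(X, δ√(n log log n)) )^p ] / (n log log n)^{p/2} < ∞. -/

import Mathlib

open MeasureTheory

/-- Truncated iterated logarithm: `log log x := ln(max(e, ln(max(e, x))))`, bounded below by 1. -/
noncomputable def LL (x : ℝ) : ℝ :=
  Real.log (max (Real.exp 1) (Real.log (max (Real.exp 1) x)))

open MeasureTheory


lemma one_le_LL (x : ℝ) : 1 ≤ LL x := by
  have h : Real.exp 1 ≤ max (Real.exp 1) (Real.log (max (Real.exp 1) x)) := le_max_left _ _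
  have := Real.log_le_log (Real.exp_pos 1) h
  simpa [Real.log_exp, LL] using this

lemma LL_pos (x : ℝ) : 0 < LL x := lt_of_lt_of_le one_pos (one_le_LL x)

lemma LL_mono : Monotone LL := by
  intro a b hab
  unfold LL
  apply Real.log_le_log (lt_max_of_lt_left (Real.exp_pos 1))
  apply max_le_max le_rfl
  apply Real.log_le_log (lt_max_of_lt_left (Real.exp_pos 1))
  exact max_le_max le_rfl hab

lemma LL_le_self {x : ℝ} (hx : 1 ≤ x) : LL x ≤ x := by
  unfold LL
  rcases le_or_gt (Real.log (max (Real.exp 1) x)) (Real.exp 1) with h | h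
  · rw [max_eq_left h, Real.log_exp]; exact hx
  · rw [max_eq_right h.le]
    have h1 : Real.log (max (Real.exp 1) x) ≤ max (Real.exp 1) x :=
      Real.log_le_self (le_max_of_le_left (Real.exp_pos 1).le)
    calc Real.log (Real.log (max (Real.exp 1) x)) ≤ Real.log (max (Real.exp 1) x) :=
          Real.log_le_self (Real.log_nonneg (le_max_of_le_left (by
            have := Real.exp_one_gt_d9; linarith)))
      _ ≤ max (Real.exp 1) x := h1
      _ = x := by
          rcases le_or_gt (Real.exp 1) x with h2 | h2
          · exact max_eq_right h2
          · exfalso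
            have : Real.log (max (Real.exp 1) x) = 1 := by rw [max_eq_left h2.le, Real.log_exp]
            rw [this] at h
            have := Real.exp_one_gt_d9; linarith

lemma LL_sq_le {x : ℝ} (hx : 0 ≤ x) : LL (x ^ 2) ≤ 2 * LL x := by
  have hE : (1:ℝ) < Real.exp 1 := by have := Real.exp_one_gt_d9; linarith
  have hL1 : 1 ≤ Real.log (max (Real.exp 1) x) := by
    have := Real.log_le_log (Real.exp_pos 1) (le_max_left (Real.exp 1) x)
    simpa [Real.log_exp] using this
  set L1 := Real.log (max (Real.exp 1) x) with hL1def
  have key : Real.log (max (Real.exp 1) (x ^ 2)) ≤ 2 * L1 := by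
    rcases le_or_gt (x ^ 2) (Real.exp 1) with h | h
    · rw [max_eq_left h, Real.log_exp]; linarith
    · rw [max_eq_right h.le]
      have hx1 : 1 < x := by nlinarith [Real.exp_pos 1]
      have : Real.log (x ^ 2) = 2 * Real.log x := by
        rw [Real.log_pow]; norm_num
      rw [this]
      have : Real.log x ≤ L1 := Real.log_le_log (by linarith) (le_max_right _ _)
      linarith
  have step1 : LL (x ^ 2) ≤ Real.log (max (Real.exp 1) (2 * L1)) := by
    unfold LL
    apply Real.log_le_log (lt_max_of_lt_left (Real.exp_pos 1))
    exact max_le_max le_rfl key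
  have step2 : Real.log (max (Real.exp 1) (2 * L1)) ≤ Real.log (2 * max (Real.exp 1) L1) := by
    apply Real.log_le_log (lt_max_of_lt_left (Real.exp_pos 1))
    rcases max_cases (Real.exp 1) (2 * L1) with ⟨h1, _⟩ | ⟨h1, _⟩ <;> rw [h1]
    · nlinarith [le_max_left (Real.exp 1) L1, Real.exp_pos 1]
    · nlinarith [le_max_right (Real.exp 1) L1]
  have step3 : Real.log (2 * max (Real.exp 1) L1) = Real.log 2 + LL x := by
    rw [Real.log_mul (by norm_num) (by positivity)]; rfl
  have hlog2 : Real.log 2 ≤ 1 := by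
    have := Real.log_le_sub_one_of_pos (x := 2) (by norm_num); linarith
  have := one_le_LL x
  calc LL (x ^ 2) ≤ Real.log 2 + LL x := by rw [← step3]; exact step1.trans step2
    _ ≤ 2 * LL x := by linarith

lemma rpow_step {s a : ℝ} (hs : 1 < s) (ha : 1 ≤ a) :
    (s - 1) * (a + 1) ^ (-s) ≤ a ^ (1 - s) - (a + 1) ^ (1 - s) := by
  have ha0 : (0:ℝ) < a := by linarith
  have ha1 : (0:ℝ) < a + 1 := by linarith
  -- Q := ((a+1)/a)^(s-1) ≥ 1 + (s-1)/(a+1)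
  have hlog : 1 / (a + 1) ≤ Real.log ((a + 1) / a) := by
    have h2 : Real.log (a / (a + 1)) ≤ a / (a + 1) - 1 :=
      Real.log_le_sub_one_of_pos (by positivity)
    have h3 : Real.log (a / (a+1)) = - Real.log ((a+1)/a) := by
      rw [← Real.log_inv]; congr 1; field_simp
    have h4 : a / (a + 1) - 1 = -(1 / (a + 1)) := by field_simp; ring
    rw [h3, h4] at h2; linarith
  have hQ : 1 + (s - 1) / (a + 1) ≤ ((a + 1) / a) ^ (s - 1) := by
    have h1 : ((a + 1) / a) ^ (s - 1) = Real.exp ((s - 1) * Real.log ((a + 1) / a)) := by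
      rw [Real.rpow_def_of_pos (by positivity), mul_comm]
    have h2 : (s - 1) * (1 / (a + 1)) ≤ (s - 1) * Real.log ((a + 1) / a) :=
      mul_le_mul_of_nonneg_left hlog (by linarith)
    have h3 := Real.add_one_le_exp ((s - 1) * Real.log ((a + 1) / a))
    rw [h1]
    have : (s-1) / (a+1) = (s-1) * (1/(a+1)) := by ring
    linarith
  -- a^(1-s) - (a+1)^(1-s) = (a+1)^(1-s) * (Q - 1)
  have hQdef : a ^ (1 - s) = (a + 1) ^ (1 - s) * ((a + 1) / a) ^ (s - 1) := by
    rw [Real.div_rpow (by linarith) ha0.le]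
    rw [show (s - 1) = -(1 - s) by ring, Real.rpow_neg ha1.le, Real.rpow_neg ha0.le]
    field_simp
  have hpow : (a + 1) ^ (1 - s) = (a + 1) * (a + 1) ^ (-s) := by
    rw [show (1 - s) = 1 + (-s) by ring, Real.rpow_add ha1, Real.rpow_one]
  have hpos : (0:ℝ) < (a + 1) ^ (1 - s) := Real.rpow_pos_of_pos ha1 _
  have := mul_le_mul_of_nonneg_left hQ hpos.le
  calc (s - 1) * (a + 1) ^ (-s)
      = (a + 1) ^ (1 - s) * (1 + (s - 1) / (a + 1)) - (a + 1) ^ (1 - s) := by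
        rw [hpow]; field_simp; ring
    _ ≤ (a + 1) ^ (1 - s) * ((a + 1) / a) ^ (s - 1) - (a + 1) ^ (1 - s) := by linarith
    _ = a ^ (1 - s) - (a + 1) ^ (1 - s) := by rw [← hQdef]

lemma tail_sum {s : ℝ} (hs : 1 < s) (k : ℕ) (hk : 1 ≤ k) (m : ℕ) :
    ∑ i ∈ Finset.range m, ((k + i : ℕ) : ℝ) ^ (-s) ≤ (k : ℝ) ^ (-s) + (k : ℝ) ^ (1 - s) / (s - 1) := by
  have hk0 : (1:ℝ) ≤ (k:ℝ) := by exact_mod_cast hk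
  have hs1 : (0:ℝ) < s - 1 := by linarith
  have main : ∀ m : ℕ, ∑ i ∈ Finset.range (m+1), ((k + i : ℕ) : ℝ) ^ (-s)
      ≤ (k : ℝ) ^ (-s) + ((k : ℝ) ^ (1 - s) - ((k + m : ℕ) : ℝ) ^ (1 - s)) / (s - 1) := by
    intro m
    induction m with
    | zero => simp
    | succ m ih =>
      rw [Finset.sum_range_succ]
      have ha : (1:ℝ) ≤ ((k + m : ℕ) : ℝ) := by
        have : (k:ℝ) ≤ ((k + m : ℕ):ℝ) := by exact_mod_cast Nat.le_add_right k m
        linarith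
      have hstep := rpow_step hs ha
      have hcast : ((k + (m + 1) : ℕ) : ℝ) = ((k + m : ℕ) : ℝ) + 1 := by push_cast; ring
      rw [hcast]
      have h2 : (((k + m : ℕ) : ℝ) + 1) ^ (-s)
          ≤ (((k + m : ℕ) : ℝ) ^ (1 - s) - (((k + m : ℕ) : ℝ) + 1) ^ (1 - s)) / (s - 1) := by
        rw [le_div_iff₀ hs1]; linarith
      calc ∑ i ∈ Finset.range (m + 1), ((k + i : ℕ) : ℝ) ^ (-s) + (((k + m : ℕ) : ℝ) + 1) ^ (-s)
          ≤ ((k : ℝ) ^ (-s) + ((k : ℝ) ^ (1 - s) - ((k + m : ℕ) : ℝ) ^ (1 - s)) / (s - 1))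
            + (((k + m : ℕ) : ℝ) ^ (1 - s) - (((k + m : ℕ) : ℝ) + 1) ^ (1 - s)) / (s - 1) :=
            add_le_add ih h2
        _ = (k : ℝ) ^ (-s) + ((k : ℝ) ^ (1 - s) - (((k + m : ℕ) : ℝ) + 1) ^ (1 - s)) / (s - 1) := by
            ring
  rcases m with _ | m
  · simp
    positivity
  · refine (main m).trans ?_
    have h1 : (0:ℝ) ≤ ((k + m : ℕ) : ℝ) ^ (1 - s) := Real.rpow_nonneg (by positivity) _
    have : ((k : ℝ) ^ (1 - s) - ((k + m : ℕ) : ℝ) ^ (1 - s)) / (s - 1) ≤ (k : ℝ) ^ (1 - s) / (s - 1) := by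
      gcongr
      linarith
    linarith
-- basic facts about b n
lemma b_lb (n : ℕ) : (n:ℝ) + 1 ≤ ((n:ℝ)+1) * LL ((n:ℝ)+1) := by
  nlinarith [one_le_LL ((n:ℝ)+1), Nat.cast_nonneg (α := ℝ) n]

lemma b_pos (n : ℕ) : (0:ℝ) < ((n:ℝ)+1) * LL ((n:ℝ)+1) := by
  have := b_lb n; have : (0:ℝ) < (n:ℝ)+1 := by positivity
  nlinarith [b_lb n]

-- (δ √b)^p = δ^p * b^(p/2)
lemma pow_sqrt_eq {δ b p : ℝ} (hδ : 0 ≤ δ) (hb : 0 ≤ b) :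
    (δ * Real.sqrt b) ^ p = δ ^ p * b ^ (p/2) := by
  rw [Real.mul_rpow hδ (Real.sqrt_nonneg b), Real.sqrt_eq_rpow, ← Real.rpow_mul hb]
  ring_nf

set_option maxHeartbeats 1000000 in
lemma det {δ p : ℝ} (hδ : 0 < δ) (hp : 2 < p) :
    ∃ K : ℝ, 0 ≤ K ∧ ∀ x : ℝ, 0 ≤ x → ∀ N : ℕ,
      ∑ n ∈ Finset.range N,
        (min x (δ * Real.sqrt (((n:ℝ)+1) * LL ((n:ℝ)+1)))) ^ p
          / (((n:ℝ)+1) * LL ((n:ℝ)+1)) ^ (p/2)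
      ≤ K * (x ^ 2 / LL x + 1) := by
  have hs : 1 < p / 2 := by linarith
  have hp0 : 0 < p := by linarith
  set s := p / 2 with hsdef
  have hs10 : (0:ℝ) < s - 1 := by linarith
  set Cs : ℝ := 1 + 1 / (s - 1) with hCsdef
  have hCs : 0 ≤ Cs := by positivity
  have h2s : (0:ℝ) < 2 ^ s := Real.rpow_pos_of_pos (by norm_num) s
  refine ⟨δ ^ p + Cs * 2 ^ s, by positivity, ?_⟩
  intro x hx N
  set L := LL x with hLdef
  have hL1 : 1 ≤ L := one_le_LL x
  have hL0 : 0 < L := LL_pos x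
  set b : ℕ → ℝ := fun n => ((n:ℝ)+1) * LL ((n:ℝ)+1) with hbdef
  have hbpos : ∀ n : ℕ, 0 < b n := fun n => b_pos n
  have hblb : ∀ n : ℕ, (n:ℝ) + 1 ≤ b n := fun n => b_lb n
  set t : ℕ → ℝ := fun n => (min x (δ * Real.sqrt (b n))) ^ p / (b n) ^ s with htdef
  have hmin_nonneg : ∀ n : ℕ, 0 ≤ min x (δ * Real.sqrt (b n)) := fun n =>
    le_min hx (by positivity)
  have ht_nonneg : ∀ n : ℕ, 0 ≤ t n := fun n =>
    div_nonneg (Real.rpow_nonneg (hmin_nonneg n) p) (Real.rpow_nonneg (hbpos n).le s)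
  have hT1 : ∀ n : ℕ, t n ≤ δ ^ p := by
    intro n
    have hb := hbpos n
    show (min x (δ * Real.sqrt (b n))) ^ p / (b n) ^ s ≤ δ ^ p
    rw [div_le_iff₀ (Real.rpow_pos_of_pos hb s)]
    calc (min x (δ * Real.sqrt (b n))) ^ p ≤ (δ * Real.sqrt (b n)) ^ p :=
          Real.rpow_le_rpow (hmin_nonneg n) (min_le_right _ _) hp0.le
      _ = δ ^ p * (b n) ^ (p/2) := pow_sqrt_eq hδ.le hb.le
      _ = δ ^ p * (b n) ^ s := by rw [hsdef]
  have hT2 : ∀ n : ℕ, t n ≤ x ^ p / (b n) ^ s := by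
    intro n
    have h := Real.rpow_le_rpow (hmin_nonneg n) (min_le_left x _) hp0.le
    show (min x (δ * Real.sqrt (b n))) ^ p / (b n) ^ s ≤ x ^ p / (b n) ^ s
    gcongr
    exact Real.rpow_nonneg (hbpos n).le s
  show ∑ n ∈ Finset.range N, t n ≤ (δ ^ p + Cs * 2 ^ s) * (x ^ 2 / L + 1)
  rw [← Finset.sum_filter_add_sum_filter_not (Finset.range N) (fun n => x ^ 2 ≤ b n)]
  have hq : 0 ≤ x ^ 2 / L := by positivity
  -- Part B : truncation region
  have partB : ∑ n ∈ (Finset.range N).filter (fun n => ¬ x ^ 2 ≤ b n), t n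
      ≤ δ ^ p * (x ^ 2 / L + 1) := by
    have hsub : (Finset.range N).filter (fun n => ¬ x ^ 2 ≤ b n)
        ⊆ Finset.range ⌈x ^ 2 / L⌉₊ := by
      intro n hn
      simp only [Finset.mem_filter, Finset.mem_range, not_le] at hn
      obtain ⟨-, hn2⟩ := hn
      rw [Finset.mem_range, Nat.lt_ceil]
      have hn0 : (0:ℝ) ≤ (n:ℝ) := Nat.cast_nonneg n
      rcases le_or_gt ((n:ℝ)+1) x with h | h
      · have hx1 : 1 < x := by nlinarith [hblb n]
        have hLx : L ≤ x := LL_le_self hx1.le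
        rw [lt_div_iff₀ hL0]
        have hmul : ((n:ℝ)+1) * L ≤ x * x := mul_le_mul h hLx hL0.le hx
        nlinarith
      · have hLL : L ≤ LL ((n:ℝ)+1) := LL_mono h.le
        rw [lt_div_iff₀ hL0]
        have h1 : ((n:ℝ)+1) * L ≤ b n := mul_le_mul_of_nonneg_left hLL (by positivity)
        nlinarith
    calc ∑ n ∈ (Finset.range N).filter (fun n => ¬ x ^ 2 ≤ b n), t n
        ≤ ∑ n ∈ (Finset.range N).filter (fun n => ¬ x ^ 2 ≤ b n), δ ^ p :=
          Finset.sum_le_sum (fun n _ => hT1 n)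
      _ = ((Finset.range N).filter (fun n => ¬ x ^ 2 ≤ b n)).card * δ ^ p := by
          rw [Finset.sum_const, nsmul_eq_mul]
      _ ≤ (⌈x ^ 2 / L⌉₊ : ℝ) * δ ^ p := by
          gcongr
          exact_mod_cast Finset.card_le_card hsub |>.trans (Finset.card_range _).le
      _ ≤ (x ^ 2 / L + 1) * δ ^ p := by
          gcongr
          exact (Nat.ceil_lt_add_one hq).le
      _ = δ ^ p * (x ^ 2 / L + 1) := mul_comm _ _
  -- Part A
  set M : ℝ := max (x ^ 2 / (2 * L)) 1 with hMdef
  have hM1 : (1:ℝ) ≤ M := le_max_right _ _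
  have hM0 : (0:ℝ) < M := by linarith
  set k : ℕ := ⌈M⌉₊ with hkdef
  have hk1 : 1 ≤ k := Nat.one_le_ceil_iff.mpr hM0
  have hMk : M ≤ (k:ℝ) := Nat.le_ceil M
  have hLs : (0:ℝ) < L ^ s := Real.rpow_pos_of_pos hL0 s
  have partA : ∑ n ∈ (Finset.range N).filter (fun n => x ^ 2 ≤ b n), t n
      ≤ Cs * 2 ^ s * (x ^ 2 / L + 1) := by
    have hA1 : ∀ n : ℕ, x ^ 2 ≤ b n → x ≤ (n:ℝ)+1 := by
      intro n hA
      by_contra h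
      push_neg at h
      have hn0 : (0:ℝ) ≤ (n:ℝ) := Nat.cast_nonneg n
      have h1 : (1:ℝ) ≤ (n:ℝ)+1 := by linarith
      have hLL : LL ((n:ℝ)+1) ≤ (n:ℝ)+1 := LL_le_self h1
      have hub : b n ≤ ((n:ℝ)+1) * ((n:ℝ)+1) := mul_le_mul_of_nonneg_left hLL (by positivity)
      nlinarith
    have hA3 : ∀ n : ℕ, x ^ 2 ≤ b n → M ≤ (n:ℝ)+1 := by
      intro n hA
      have hn0 : (0:ℝ) ≤ (n:ℝ) := Nat.cast_nonneg n
      apply max_le ?_ (by linarith)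
      rcases le_or_gt (x ^ 2) ((n:ℝ)+1) with h | h
      · calc x ^ 2 / (2 * L) ≤ x ^ 2 := div_le_self (by positivity) (by linarith)
          _ ≤ (n:ℝ)+1 := h
      · have h2 : LL ((n:ℝ)+1) ≤ 2 * L := by
          calc LL ((n:ℝ)+1) ≤ LL (x ^ 2) := LL_mono h.le
            _ ≤ 2 * L := LL_sq_le hx
        rw [div_le_iff₀ (by linarith : (0:ℝ) < 2 * L)]
        calc x ^ 2 ≤ b n := hA
          _ ≤ ((n:ℝ)+1) * (2 * L) := mul_le_mul_of_nonneg_left h2 (by positivity)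
    have hA4 : ∀ n : ℕ, x ^ 2 ≤ b n → t n ≤ x ^ p / L ^ s * ((((n:ℝ)+1) ^ s)⁻¹) := by
      intro n hA
      have hA2 : L ≤ LL ((n:ℝ)+1) := LL_mono (hA1 n hA)
      have hn0 : (0:ℝ) ≤ (n:ℝ) := Nat.cast_nonneg n
      have hmul : ((n:ℝ)+1) * L ≤ b n := mul_le_mul_of_nonneg_left hA2 (by positivity)
      have hnpos : (0:ℝ) < ((n:ℝ)+1) := by positivity
      calc t n ≤ x ^ p / (b n) ^ s := hT2 n
        _ ≤ x ^ p / ((((n:ℝ)+1) * L) ^ s) :=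
            div_le_div_of_nonneg_left (Real.rpow_nonneg hx p)
              (Real.rpow_pos_of_pos (by positivity) s)
              (Real.rpow_le_rpow (by positivity) hmul (by linarith))
        _ = x ^ p / L ^ s * ((((n:ℝ)+1) ^ s)⁻¹) := by
            rw [Real.mul_rpow hnpos.le hL0.le]
            ring
    have hsubA : (Finset.range N).filter (fun n => x ^ 2 ≤ b n)
        ⊆ (Finset.range N).filter (fun n => k ≤ n + 1) := by
      intro n hn
      simp only [Finset.mem_filter, Finset.mem_range] at hn ⊢
      refine ⟨hn.1, ?_⟩
      rw [hkdef, Nat.ceil_le]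
      push_cast
      exact hA3 n hn.2
    have hfilter : (Finset.range N).filter (fun n => k ≤ n + 1) = Finset.Ico (k-1) N := by
      ext n
      simp only [Finset.mem_filter, Finset.mem_range, Finset.mem_Ico]
      omega
    have htail : ∑ n ∈ (Finset.range N).filter (fun n => k ≤ n + 1), ((((n:ℝ)+1) ^ s)⁻¹)
        ≤ M ^ (1-s) * Cs := by
      rw [hfilter, Finset.sum_Ico_eq_sum_range]
      have heq : ∀ i : ℕ, ((((k - 1 + i : ℕ):ℝ) + 1) ^ s)⁻¹ = ((k + i : ℕ):ℝ) ^ (-s) := by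
        intro i
        have h1 : (k - 1 + i) + 1 = k + i := by omega
        have h2 : (((k - 1 + i : ℕ):ℝ) + 1) = ((k + i : ℕ):ℝ) := by
          exact_mod_cast congrArg (Nat.cast : ℕ → ℝ) h1
        rw [h2, Real.rpow_neg (by positivity)]
      have hksle : (k:ℝ) ^ (1-s) ≤ M ^ (1-s) :=
        Real.rpow_le_rpow_of_nonpos hM0 hMk (by linarith)
      calc ∑ i ∈ Finset.range (N - (k-1)), ((((k - 1 + i : ℕ):ℝ) + 1) ^ s)⁻¹
          = ∑ i ∈ Finset.range (N - (k-1)), ((k + i : ℕ):ℝ) ^ (-s) :=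
            Finset.sum_congr rfl (fun i _ => heq i)
        _ ≤ (k : ℝ) ^ (-s) + (k : ℝ) ^ (1 - s) / (s - 1) := tail_sum hs k hk1 _
        _ ≤ M ^ (-s) + M ^ (1 - s) / (s - 1) := by
            have h1 : (k:ℝ) ^ (-s) ≤ M ^ (-s) :=
              Real.rpow_le_rpow_of_nonpos hM0 hMk (by linarith)
            have h3 : (k:ℝ) ^ (1-s) / (s-1) ≤ M ^ (1-s) / (s-1) := by
              rw [div_eq_mul_inv, div_eq_mul_inv]
              exact mul_le_mul_of_nonneg_right hksle (inv_nonneg.mpr hs10.le)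
            linarith
        _ ≤ M ^ (1-s) + M ^ (1 - s) / (s - 1) := by
            have : M ^ (-s) ≤ M ^ (1-s) :=
              Real.rpow_le_rpow_of_exponent_le hM1 (by linarith)
            linarith
        _ = M ^ (1-s) * Cs := by rw [hCsdef, mul_add, mul_one, mul_one_div]
    have hcoef : (0:ℝ) ≤ x ^ p / L ^ s := by positivity
    have e1 : x ^ p = (x ^ 2) ^ s := by
      rw [← Real.rpow_natCast x 2, ← Real.rpow_mul hx]
      congr 1
      push_cast
      rw [hsdef]; ring
    calc ∑ n ∈ (Finset.range N).filter (fun n => x ^ 2 ≤ b n), t n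
        ≤ ∑ n ∈ (Finset.range N).filter (fun n => x ^ 2 ≤ b n),
            x ^ p / L ^ s * ((((n:ℝ)+1) ^ s)⁻¹) :=
          Finset.sum_le_sum (fun n hn => hA4 n (Finset.mem_filter.mp hn).2)
      _ ≤ ∑ n ∈ (Finset.range N).filter (fun n => k ≤ n + 1),
            x ^ p / L ^ s * ((((n:ℝ)+1) ^ s)⁻¹) := by
          apply Finset.sum_le_sum_of_subset_of_nonneg hsubA
          intro n _ _
          have hn0 : (0:ℝ) ≤ (n:ℝ) := Nat.cast_nonneg n
          positivity
      _ = x ^ p / L ^ s * ∑ n ∈ (Finset.range N).filter (fun n => k ≤ n + 1),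
            ((((n:ℝ)+1) ^ s)⁻¹) := by rw [Finset.mul_sum]
      _ ≤ x ^ p / L ^ s * (M ^ (1-s) * Cs) := mul_le_mul_of_nonneg_left htail hcoef
      _ ≤ Cs * 2 ^ s * (x ^ 2 / L + 1) := by
          rcases le_or_gt (2 * L) (x ^ 2) with hc | hc
          · have hM : M = x ^ 2 / (2 * L) := by
              rw [hMdef, max_eq_left]
              rw [le_div_iff₀ (by linarith : (0:ℝ) < 2 * L)]
              linarith
            have hx0 : 0 < x := by nlinarith
            have hx2 : (0:ℝ) < x ^ 2 := by positivity
            have e2 : (x ^ 2 / (2 * L)) ^ (1-s) = (x ^ 2) ^ (1-s) * (2 * L) ^ (s-1) := by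
              rw [Real.div_rpow hx2.le (by positivity),
                show (s-1) = -(1-s) by ring, Real.rpow_neg (by positivity), div_eq_mul_inv]
            have e3 : (x ^ 2) ^ s * (x ^ 2) ^ (1-s) = x ^ 2 := by
              rw [← Real.rpow_add hx2, show s + (1-s) = 1 by ring, Real.rpow_one]
            have e4 : (2 * L) ^ (s-1) = 2 ^ s * L ^ s / (2 * L) := by
              rw [show s - 1 = s + (-1) by ring, Real.rpow_add (by positivity : (0:ℝ) < 2*L),
                Real.rpow_neg_one, Real.mul_rpow (by norm_num) hL0.le]
              field_simp
            have key : x ^ p / L ^ s * (M ^ (1-s) * Cs) = Cs * 2 ^ s * (x ^ 2 / L) / 2 := by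
              rw [hM, e1, e2, e4]
              calc (x ^ 2) ^ s / L ^ s *
                    ((x ^ 2) ^ (1-s) * (2 ^ s * L ^ s / (2 * L)) * Cs)
                  = ((x ^ 2) ^ s * (x ^ 2) ^ (1-s)) * (2 ^ s * Cs / (2 * L)) * (L ^ s / L ^ s) := by
                    ring
                _ = x ^ 2 * (2 ^ s * Cs / (2 * L)) * 1 := by rw [e3, div_self hLs.ne']
                _ = Cs * 2 ^ s * (x ^ 2 / L) / 2 := by ring
            rw [key]
            have h01 : (0:ℝ) ≤ Cs * 2 ^ s * (x ^ 2 / L) := mul_nonneg (mul_nonneg hCs h2s.le) hq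
            have h02 : (0:ℝ) ≤ Cs * 2 ^ s := mul_nonneg hCs h2s.le
            calc Cs * 2 ^ s * (x ^ 2 / L) / 2 ≤ Cs * 2 ^ s * (x ^ 2 / L) :=
                  div_le_self h01 one_le_two
              _ ≤ Cs * 2 ^ s * (x ^ 2 / L + 1) :=
                  mul_le_mul_of_nonneg_left (by linarith) h02
          · have h1 : M ^ (1-s) ≤ 1 :=
              Real.rpow_le_one_of_one_le_of_nonpos hM1 (by linarith)
            have h2 : x ^ p ≤ 2 ^ s * L ^ s := by
              calc x ^ p = (x ^ 2) ^ s := e1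
                _ ≤ (2 * L) ^ s := Real.rpow_le_rpow (by positivity) hc.le (by linarith)
                _ = 2 ^ s * L ^ s := Real.mul_rpow (by norm_num) hL0.le
            have h3 : x ^ p / L ^ s ≤ 2 ^ s := by
              rw [div_le_iff₀ hLs]
              linarith
            calc x ^ p / L ^ s * (M ^ (1-s) * Cs) ≤ 2 ^ s * (1 * Cs) := by
                  apply mul_le_mul h3 ?_ (by positivity) h2s.le
                  exact mul_le_mul_of_nonneg_right h1 hCs
              _ = Cs * 2 ^ s * 1 := by ring
              _ ≤ Cs * 2 ^ s * (x ^ 2 / L + 1) := by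
                  apply mul_le_mul_of_nonneg_left (by linarith) (by positivity)
  calc ∑ n ∈ (Finset.range N).filter (fun n => x ^ 2 ≤ b n), t n
        + ∑ n ∈ (Finset.range N).filter (fun n => ¬ x ^ 2 ≤ b n), t n
      ≤ Cs * 2 ^ s * (x ^ 2 / L + 1) + δ ^ p * (x ^ 2 / L + 1) := add_le_add partA partB
    _ = (δ ^ p + Cs * 2 ^ s) * (x ^ 2 / L + 1) := by ring

lemma trunc_le {δ p b x : ℝ} (hδ : 0 ≤ δ) (hp0 : 0 ≤ p) (hb : 0 < b) (hx : 0 ≤ x) :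
    (min x (δ * Real.sqrt b)) ^ p / b ^ (p/2) ≤ δ ^ p := by
  have hmn : 0 ≤ min x (δ * Real.sqrt b) := le_min hx (by positivity)
  rw [div_le_iff₀ (Real.rpow_pos_of_pos hb (p/2))]
  calc (min x (δ * Real.sqrt b)) ^ p ≤ (δ * Real.sqrt b) ^ p :=
        Real.rpow_le_rpow hmn (min_le_right _ _) hp0
    _ = δ ^ p * b ^ (p/2) := pow_sqrt_eq hδ hb.le

/-- If `E[X²/log log X] < ∞` then for any `δ > 0` and `p > 2`,
`Σₙ E[(min(X, δ√(n log log n)))^p] / (n log log n)^{p/2} < ∞`. -/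
theorem stmt4 {Ω : Type*} [MeasurableSpace Ω] (μ : Measure Ω) [IsProbabilityMeasure μ]
    (X : Ω → ℝ) (hX : Measurable X) (hpos : ∀ ω, 0 ≤ X ω)
    (hint : Integrable (fun ω => (X ω) ^ 2 / LL (X ω)) μ)
    (δ p : ℝ) (hδ : 0 < δ) (hp : 2 < p) :
    Summable fun n : ℕ =>
      (∫ ω, (min (X ω) (δ * Real.sqrt (((n : ℝ) + 1) * LL ((n : ℝ) + 1)))) ^ p ∂μ)
        / (((n : ℝ) + 1) * LL ((n : ℝ) + 1)) ^ (p / 2) := by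
  obtain ⟨K, hK0, hK⟩ := det hδ hp
  have hp0 : 0 < p := by linarith
  set b : ℕ → ℝ := fun n => ((n:ℝ) + 1) * LL ((n:ℝ) + 1) with hbdef
  have hbpos : ∀ n : ℕ, 0 < b n := fun n => b_pos n
  set f : ℕ → Ω → ℝ :=
    fun n ω => (min (X ω) (δ * Real.sqrt (b n))) ^ p / (b n) ^ (p/2) with hfdef
  have hf_nonneg : ∀ n ω, 0 ≤ f n ω := fun n ω =>
    div_nonneg (Real.rpow_nonneg (le_min (hpos ω) (by positivity)) p)
      (Real.rpow_nonneg (hbpos n).le _)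
  have hf_le : ∀ n ω, f n ω ≤ δ ^ p := fun n ω =>
    trunc_le hδ.le hp0.le (hbpos n) (hpos ω)
  have hcont : Continuous fun y : ℝ => y ^ p :=
    continuous_iff_continuousAt.mpr fun x => Real.continuousAt_rpow_const x p (Or.inr hp0.le)
  have hmeas : ∀ n, Measurable (f n) := fun n =>
    (hcont.measurable.comp (hX.min measurable_const)).div_const _
  have hint2 : ∀ n, Integrable (f n) μ := by
    intro n
    refine Integrable.mono' (integrable_const (δ ^ p)) (hmeas n).aestronglyMeasurable ?_
    filter_upwards with ω
    rw [Real.norm_of_nonneg (hf_nonneg n ω)]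
    exact hf_le n ω
  have hterm : ∀ n : ℕ,
      (∫ ω, (min (X ω) (δ * Real.sqrt (b n))) ^ p ∂μ) / (b n) ^ (p/2) = ∫ ω, f n ω ∂μ :=
    fun n => (integral_div _ _).symm
  have hg : Integrable (fun ω => K * ((X ω) ^ 2 / LL (X ω) + 1)) μ :=
    (hint.add (integrable_const 1)).const_mul K
  apply summable_of_sum_range_le (c := ∫ ω, K * ((X ω) ^ 2 / LL (X ω) + 1) ∂μ)
  · intro n
    exact div_nonneg (integral_nonneg fun ω =>
        Real.rpow_nonneg (le_min (hpos ω) (by positivity)) p)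
      (Real.rpow_nonneg (hbpos n).le _)
  · intro N
    calc ∑ n ∈ Finset.range N,
          (∫ ω, (min (X ω) (δ * Real.sqrt (b n))) ^ p ∂μ) / (b n) ^ (p/2)
        = ∑ n ∈ Finset.range N, ∫ ω, f n ω ∂μ :=
          Finset.sum_congr rfl (fun n _ => hterm n)
      _ = ∫ ω, ∑ n ∈ Finset.range N, f n ω ∂μ :=
          (integral_finset_sum _ (fun n _ => hint2 n)).symm
      _ ≤ ∫ ω, K * ((X ω) ^ 2 / LL (X ω) + 1) ∂μ := by
          apply integral_mono (integrable_finset_sum _ (fun n _ => hint2 n)) hg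
          intro ω
          exact hK (X ω) (hpos ω) N
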